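/- arXiv:1209.5011 — 7 statements merged into one kernel-verified Lean document; each statement's English description precedes it below -/
import Mathlib

section
/- Let A be an n×n matrix over ℝ≥0∞ and let A* := ∑' k, A^k be its closure. Then for all indices i, j, the entry (A*) i j equals the sum, over all k ≥ 0 and over all sequences of indices i₀ = i, i₁, …, i_k = j (paths of length k from i to j), of the products A i₀ i₁ · A i₁ i₂ · ⋯ · A i_{k−1} i_k (where the empty product for k = 0 is 1 when i = j). That is, the closure entry (A*)_{ij} is the sum of weights of all finite paths connecting node i with node j in the weighted digraph of A. -/
open scoped ENNReal

theorem pow_entry_eq (n : ℕ) (A : Matrix (Fin n) (Fin n) ℝ≥0∞) :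
    ∀ (k : ℕ) (i j : Fin n), (A ^ k) i j =
      ∑ p : Fin (k + 1) → Fin n,
        (if p 0 = i ∧ p (Fin.last k) = j then
          ∏ l : Fin k, A (p l.castSucc) (p l.succ) else 0) := by
  intro k
  induction k with
  | zero =>
    intro i j
    rw [pow_zero,
      Fintype.sum_equiv (Equiv.funUnique (Fin 1) (Fin n))
        (fun p : Fin 1 → Fin n => if p 0 = i ∧ p (Fin.last 0) = j then
          ∏ l : Fin 0, A (p l.castSucc) (p l.succ) else 0)
        (fun x => if x = i ∧ x = j then 1 else 0)
        (fun p => by simp [Equiv.funUnique, Fin.last])]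
    simp only [Matrix.one_apply]
    by_cases h : i = j
    · subst h
      simp
    · rw [if_neg h, eq_comm]
      exact Finset.sum_eq_zero fun x _ => by
        rw [if_neg]; rintro ⟨rfl, rfl⟩; exact h rfl
  | succ k ih =>
    intro i j
    rw [pow_succ', Matrix.mul_apply,
      Fintype.sum_equiv (Fin.consEquiv (fun _ : Fin (k + 2) => Fin n)).symm
        (fun p : Fin (k + 2) → Fin n => if p 0 = i ∧ p (Fin.last (k + 1)) = j then
          ∏ l : Fin (k + 1), A (p l.castSucc) (p l.succ) else 0)
        (fun z => if z.1 = i ∧ z.2 (Fin.last k) = j then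
          A z.1 (z.2 0) * ∏ l : Fin k, A (z.2 l.castSucc) (z.2 l.succ) else 0)
        ?_]
    · rw [Fintype.sum_prod_type]
      simp only [ih, Finset.mul_sum, mul_ite, mul_zero]
      rw [Finset.sum_comm]
      simp only [ite_and, Finset.sum_ite_eq, Finset.sum_ite_irrel, Finset.sum_const_zero,
        Finset.sum_ite_eq', Finset.mem_univ, if_true]
    · intro p
      simp only [Fin.consEquiv_symm_apply, Fin.tail, Fin.prod_univ_succ, Fin.succ_castSucc,
        ← Fin.succ_last, Fin.castSucc_zero]

open scoped ENNReal in
/-- The `(i,j)` entry of the closure `A* = ∑' k, A ^ k` of a matrix over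
`ℝ≥0∞` is the sum of the weights of all finite paths from node `i` to
node `j` in the weighted digraph of `A`. -/
theorem closure_entry_eq_sum_path_weights (n : ℕ)
    (A : Matrix (Fin n) (Fin n) ℝ≥0∞) (i j : Fin n) :
    (∑' k : ℕ, A ^ k) i j =
      ∑' k : ℕ, ∑ p : Fin (k + 1) → Fin n,
        (if p 0 = i ∧ p (Fin.last k) = j then
          ∏ l : Fin k, A (p l.castSucc) (p l.succ) else 0) := by
  have h1 : (∑' k : ℕ, A ^ k) = fun i j => ∑' k : ℕ, (A ^ k) i j := by
    have hs : HasSum (fun k : ℕ => A ^ k)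
        (fun i j => ∑' k : ℕ, (A ^ k) i j : Matrix (Fin n) (Fin n) ℝ≥0∞) :=
      Pi.hasSum.mpr fun i => Pi.hasSum.mpr fun j => ENNReal.summable.hasSum
    exact hs.tsum_eq
  rw [h1]
  exact tsum_congr fun k => pow_entry_eq n A k i j
end

section
/- Let a, b ∈ ℝ≥0∞ and let a* := ∑' k, a^k. Then x = a*·b is the least solution of the equation x = a·x + b: it satisfies a·(a*·b) + b = a*·b, and for every y ∈ ℝ≥0∞ with y = a·y + b one has a*·b ≤ y. -/
open scoped ENNReal

/-! Shifting the series gives `a * a* + 1 = a*`, so `a* * b` solves `x = a * x + b`. Conversely,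
unfolding `y = a * y + b` shows by induction that `y` dominates every partial sum
`(∑ k < n, a ^ k) * b`, hence the whole series. -/

theorem geom_sum_mul_le_of_eq_mul_add {R : Type*} [Semiring R] [PartialOrder R]
    [CanonicallyOrderedAdd R] {a b y : R} (hy : y = a * y + b) (n : ℕ) :
    (∑ k ∈ Finset.range n, a ^ k) * b ≤ y := by
  induction n with
  | zero => simp
  | succ n ih =>
    calc (∑ k ∈ Finset.range (n + 1), a ^ k) * b
        = a * ((∑ k ∈ Finset.range n, a ^ k) * b) + b := by
          rw [geom_sum_succ, add_mul, one_mul, mul_assoc]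
      _ ≤ a * y + b := by gcongr
      _ = y := hy.symm

namespace ENNReal

theorem mul_tsum_pow_add_one (a : ℝ≥0∞) : a * ∑' k, a ^ k + 1 = ∑' k, a ^ k := by
  conv_rhs => rw [tsum_eq_zero_add' ENNReal.summable]
  rw [pow_zero, add_comm, ← ENNReal.tsum_mul_left]
  simp only [pow_succ']

theorem tsum_pow_mul_le_of_eq_mul_add {a b y : ℝ≥0∞} (hy : y = a * y + b) :
    (∑' k, a ^ k) * b ≤ y := by
  rw [← ENNReal.tsum_mul_right]
  refine ENNReal.tsum_le_of_sum_range_le fun n => ?_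
  rw [← Finset.sum_mul]
  exact geom_sum_mul_le_of_eq_mul_add hy n

end ENNReal

/-- For `a, b ∈ ℝ≥0∞`, the element `a* * b` (where `a* = ∑' k, a ^ k`) is
the least solution of the equation `x = a * x + b`. -/
theorem closure_mul_least_solution (a b : ℝ≥0∞) :
    a * ((∑' k : ℕ, a ^ k) * b) + b = (∑' k : ℕ, a ^ k) * b ∧
    ∀ y : ℝ≥0∞, y = a * y + b → (∑' k : ℕ, a ^ k) * b ≤ y := by
  refine ⟨?_, fun y hy => ENNReal.tsum_pow_mul_le_of_eq_mul_add hy⟩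
  calc a * ((∑' k, a ^ k) * b) + b = (a * ∑' k, a ^ k + 1) * b := by ring
    _ = (∑' k, a ^ k) * b := by rw [ENNReal.mul_tsum_pow_add_one]
end

section
/- Let A be an n×n matrix over ℝ≥0∞ and let A* := ∑' k, A^k be its closure. Then A* satisfies both matrix equations A* = A·A* + I and A* = A*·A + I, where I is the n×n identity matrix. -/
open scoped ENNReal

namespace Matrix

variable {ι l m n : Type*}

theorem summable_ennreal (f : ι → Matrix m n ℝ≥0∞) : Summable f :=
  Pi.summable.2 fun _ => Pi.summable.2 fun _ => ENNReal.summable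

theorem tsum_apply_ennreal (f : ι → Matrix m n ℝ≥0∞) (i : m) (j : n) :
    (∑' k, f k) i j = ∑' k, f k i j :=
  (congrFun (tsum_apply (summable_ennreal f)) j).trans ENNReal.tsum_apply

-- `ℝ≥0∞` is not a topological semiring (`0 * ∞`), so `Summable.tsum_mul_left` is unavailable and
-- the interchange is done entrywise.
theorem mul_tsum_ennreal [Fintype m] (A : Matrix l m ℝ≥0∞) (f : ι → Matrix m n ℝ≥0∞) :
    A * ∑' k, f k = ∑' k, A * f k := by
  ext i j
  simp only [tsum_apply_ennreal, mul_apply, ← ENNReal.tsum_mul_left]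
  exact (Summable.tsum_finsetSum fun _ _ => ENNReal.summable).symm

theorem tsum_mul_ennreal [Fintype m] (f : ι → Matrix l m ℝ≥0∞) (A : Matrix m n ℝ≥0∞) :
    (∑' k, f k) * A = ∑' k, f k * A := by
  ext i j
  simp only [tsum_apply_ennreal, mul_apply, ← ENNReal.tsum_mul_right]
  exact (Summable.tsum_finsetSum fun _ _ => ENNReal.summable).symm

end Matrix

/-- The closure `A* = ∑' k, A ^ k` of a square matrix over `ℝ≥0∞`
satisfies `A* = A * A* + I` and `A* = A* * A + I`. -/
theorem matrix_closure_fixed_point (n : ℕ) (A : Matrix (Fin n) (Fin n) ℝ≥0∞) :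
    (∑' k : ℕ, A ^ k) = A * (∑' k : ℕ, A ^ k) + 1 ∧
    (∑' k : ℕ, A ^ k) = (∑' k : ℕ, A ^ k) * A + 1 := by
  have peel : ∑' k, A ^ k = A ^ 0 + ∑' k, A ^ (k + 1) :=
    tsum_eq_zero_add' (Matrix.summable_ennreal _)
  rw [pow_zero] at peel
  constructor
  · rw [Matrix.mul_tsum_ennreal, add_comm]
    simpa only [pow_succ'] using peel
  · rw [Matrix.tsum_mul_ennreal, add_comm]
    simpa only [pow_succ] using peel
end

section
/- Let A11 be a k×k matrix, A12 a k×m matrix, A21 an m×k matrix and A22 an m×m matrix over ℝ≥0∞, and let A be the (k+m)×(k+m) block matrix with blocks A11, A12, A21, A22. Set D := A22 + A21·A11*·A12. Then the closure of A is the block matrix whose blocks are: top-left A11* + A11*·A12·D*·A21·A11*, top-right A11*·A12·D*, bottom-left D*·A21·A11*, and bottom-right D*. -/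
/-!
Over `ℝ≥0∞`, `M* * b = ∑ Mᵏ * b` is the least entrywise solution of `b + M * x ≤ x`, and it
solves `b + M * x = x`. For a block matrix the system reads `b₁ + A₁₁ x₁ + A₁₂ x₂ ≤ x₁`,
`b₂ + A₂₁ x₁ + A₂₂ x₂ ≤ x₂`. The first inequality gives `A₁₁* (b₁ + A₁₂ x₂) ≤ x₁`, and substituting
this into the second leaves `(b₂ + A₂₁ A₁₁* b₁) + D x₂ ≤ x₂`. So Gaussian elimination produces the
least solution `x₂ = D* (b₂ + A₂₁ A₁₁* b₁)`, `x₁ = A₁₁* (b₁ + A₁₂ x₂)`, and the closure of the block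
matrix is this least solution for `b = 1`, taken one block column at a time.
-/

open scoped ENNReal

noncomputable def matrixClosure {p : Type*} [Fintype p] [DecidableEq p]
    (M : Matrix p p ℝ≥0∞) : Matrix p p ℝ≥0∞ :=
  ∑' k : ℕ, M ^ k

abbrev Matrix.entrywisePartialOrder {m n α : Type*} [PartialOrder α] :
    PartialOrder (Matrix m n α) :=
  inferInstanceAs (PartialOrder (m → n → α))

attribute [local instance] Matrix.entrywisePartialOrder

theorem Matrix.entrywise_isOrderedAddMonoid {m n α : Type*} [AddCommMonoid α] [PartialOrder α]
    [IsOrderedAddMonoid α] : IsOrderedAddMonoid (Matrix m n α) :=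
  inferInstanceAs (IsOrderedAddMonoid (m → n → α))

attribute [local instance] Matrix.entrywise_isOrderedAddMonoid

namespace Matrix

variable {l m n α : Type*}

@[gcongr]
theorem mul_le_mul_right [Fintype m] [NonUnitalNonAssocSemiring α] [PartialOrder α]
    [IsOrderedAddMonoid α] [MulLeftMono α] (M : Matrix l m α) {x y : Matrix m n α}
    (h : x ≤ y) : M * x ≤ M * y :=
  fun _ j => Finset.sum_le_sum fun k _ => _root_.mul_le_mul_right (h k j) _

theorem fromBlocks_le_fromBlocks_iff {k : Type*} [PartialOrder α] {A₁₁ B₁₁ : Matrix l m α}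
    {A₁₂ B₁₂ : Matrix l n α} {A₂₁ B₂₁ : Matrix k m α} {A₂₂ B₂₂ : Matrix k n α} :
    fromBlocks A₁₁ A₁₂ A₂₁ A₂₂ ≤ fromBlocks B₁₁ B₁₂ B₂₁ B₂₂ ↔
      A₁₁ ≤ B₁₁ ∧ A₁₂ ≤ B₁₂ ∧ A₂₁ ≤ B₂₁ ∧ A₂₂ ≤ B₂₂ := by
  refine ⟨fun h => ⟨fun i j => h (.inl i) (.inl j), fun i j => h (.inl i) (.inr j),
    fun i j => h (.inr i) (.inl j), fun i j => h (.inr i) (.inr j)⟩, ?_⟩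
  rintro ⟨h₁₁, h₁₂, h₂₁, h₂₂⟩ (i | i) (j | j)
  exacts [h₁₁ i j, h₁₂ i j, h₂₁ i j, h₂₂ i j]

end Matrix

namespace ENNReal

variable {ι m n p : Type*}

theorem matrix_summable (f : ι → Matrix m n ℝ≥0∞) : Summable f :=
  Pi.summable.2 fun _ => Pi.summable.2 fun _ => ENNReal.summable

theorem matrix_tsum_apply (f : ι → Matrix m n ℝ≥0∞) (i : m) (j : n) :
    (∑' k, f k) i j = ∑' k, f k i j := by
  erw [tsum_apply (matrix_summable f), ENNReal.tsum_apply]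

theorem matrix_mul_tsum [Fintype n] (M : Matrix m n ℝ≥0∞) (f : ι → Matrix n p ℝ≥0∞) :
    M * ∑' k, f k = ∑' k, M * f k := by
  ext i j
  simp only [Matrix.mul_apply, matrix_tsum_apply, ← ENNReal.tsum_mul_left]
  exact (Summable.tsum_finsetSum fun _ _ => ENNReal.summable).symm

theorem matrix_tsum_mul [Fintype n] (f : ι → Matrix m n ℝ≥0∞) (M : Matrix n p ℝ≥0∞) :
    (∑' k, f k) * M = ∑' k, f k * M := by
  ext i j
  simp only [Matrix.mul_apply, matrix_tsum_apply, ← ENNReal.tsum_mul_right]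
  exact (Summable.tsum_finsetSum fun _ _ => ENNReal.summable).symm

end ENNReal

open Matrix

section Closure

variable {n p : Type*} [Fintype n] [DecidableEq n]

theorem one_add_mul_matrixClosure (M : Matrix n n ℝ≥0∞) :
    1 + M * matrixClosure M = matrixClosure M := by
  rw [matrixClosure, ENNReal.matrix_mul_tsum]
  conv_rhs => rw [tsum_eq_zero_add' (ENNReal.matrix_summable _), pow_zero]
  simp only [pow_succ']

theorem matrixClosure_mul_le {M : Matrix n n ℝ≥0∞} {b x : Matrix n p ℝ≥0∞}
    (h : b + M * x ≤ x) : matrixClosure M * b ≤ x := by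
  have partial_sums (N : ℕ) : (∑ k ∈ Finset.range N, M ^ k) * b ≤ x := by
    induction N with
    | zero => rw [Finset.sum_range_zero, Matrix.zero_mul]; exact fun _ _ => zero_le
    | succ N ih =>
      calc (∑ k ∈ Finset.range (N + 1), M ^ k) * b
          = b + M * ((∑ k ∈ Finset.range N, M ^ k) * b) := by
            simp only [Finset.sum_range_succ', pow_succ', ← Matrix.mul_sum, pow_zero]
            rw [Matrix.add_mul, Matrix.one_mul, Matrix.mul_assoc, add_comm]
        _ ≤ b + M * x := by gcongr
        _ ≤ x := h
  intro i j
  rw [matrixClosure, ENNReal.matrix_tsum_mul, ENNReal.matrix_tsum_apply]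
  refine ENNReal.tsum_le_of_sum_range_le fun N => ?_
  simpa only [Matrix.sum_mul, Matrix.sum_apply] using partial_sums N i j

theorem isLeast_matrixClosure_mul (M : Matrix n n ℝ≥0∞) (b : Matrix n p ℝ≥0∞) :
    IsLeast {x | b + M * x ≤ x} (matrixClosure M * b) := by
  refine ⟨?_, fun _ => matrixClosure_mul_le⟩
  calc b + M * (matrixClosure M * b) = (1 + M * matrixClosure M) * b := by
        rw [Matrix.add_mul, Matrix.one_mul, Matrix.mul_assoc]
    _ = matrixClosure M * b := by rw [one_add_mul_matrixClosure]
    _ ≤ matrixClosure M * b := le_rfl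

end Closure

section BlockElimination

variable {k m n : Type*} [Fintype k] [DecidableEq k] [Fintype m] [DecidableEq m]
  {A₁₁ : Matrix k k ℝ≥0∞} {A₁₂ : Matrix k m ℝ≥0∞} {A₂₁ : Matrix m k ℝ≥0∞}
  {A₂₂ D : Matrix m m ℝ≥0∞} {b₁ x₁ y₁ : Matrix k n ℝ≥0∞} {b₂ x₂ y₂ : Matrix m n ℝ≥0∞}

theorem block_elimination_eq (hD : D = A₂₂ + A₂₁ * matrixClosure A₁₁ * A₁₂)
    (hy₂ : y₂ = matrixClosure D * (b₂ + A₂₁ * matrixClosure A₁₁ * b₁))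
    (hy₁ : y₁ = matrixClosure A₁₁ * (b₁ + A₁₂ * y₂)) :
    b₁ + (A₁₁ * y₁ + A₁₂ * y₂) = y₁ ∧ b₂ + (A₂₁ * y₁ + A₂₂ * y₂) = y₂ := by
  constructor
  · calc b₁ + (A₁₁ * y₁ + A₁₂ * y₂)
        = (1 + A₁₁ * matrixClosure A₁₁) * (b₁ + A₁₂ * y₂) := by
          rw [hy₁, Matrix.add_mul, Matrix.one_mul, Matrix.mul_assoc]; abel
      _ = y₁ := by rw [one_add_mul_matrixClosure, hy₁]
  · calc b₂ + (A₂₁ * y₁ + A₂₂ * y₂)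
        = (b₂ + A₂₁ * matrixClosure A₁₁ * b₁) + D * y₂ := by
          rw [hy₁, hD]; simp only [Matrix.mul_add, Matrix.add_mul, Matrix.mul_assoc]; abel
      _ = (1 + D * matrixClosure D) * (b₂ + A₂₁ * matrixClosure A₁₁ * b₁) := by
          rw [hy₂, Matrix.add_mul, Matrix.one_mul, Matrix.mul_assoc D]
      _ = y₂ := by rw [one_add_mul_matrixClosure, hy₂]

theorem block_elimination_le (hD : D = A₂₂ + A₂₁ * matrixClosure A₁₁ * A₁₂)
    (hy₂ : y₂ = matrixClosure D * (b₂ + A₂₁ * matrixClosure A₁₁ * b₁))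
    (hy₁ : y₁ = matrixClosure A₁₁ * (b₁ + A₁₂ * y₂))
    (h₁ : b₁ + (A₁₁ * x₁ + A₁₂ * x₂) ≤ x₁) (h₂ : b₂ + (A₂₁ * x₁ + A₂₂ * x₂) ≤ x₂) :
    y₁ ≤ x₁ ∧ y₂ ≤ x₂ := by
  have hx₁ : matrixClosure A₁₁ * (b₁ + A₁₂ * x₂) ≤ x₁ :=
    matrixClosure_mul_le (by rwa [add_assoc, add_comm (A₁₂ * x₂)])
  have hx₂ : y₂ ≤ x₂ := by
    rw [hy₂]
    refine matrixClosure_mul_le ?_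
    calc b₂ + A₂₁ * matrixClosure A₁₁ * b₁ + D * x₂
        = b₂ + (A₂₁ * (matrixClosure A₁₁ * (b₁ + A₁₂ * x₂)) + A₂₂ * x₂) := by
          rw [hD]; simp only [Matrix.mul_add, Matrix.add_mul, Matrix.mul_assoc]; abel
      _ ≤ b₂ + (A₂₁ * x₁ + A₂₂ * x₂) := by gcongr
      _ ≤ x₂ := h₂
  refine ⟨?_, hx₂⟩
  calc y₁ = matrixClosure A₁₁ * (b₁ + A₁₂ * y₂) := hy₁
    _ ≤ matrixClosure A₁₁ * (b₁ + A₁₂ * x₂) := by gcongr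
    _ ≤ x₁ := hx₁

theorem isLeast_one_add_fromBlocks_mul_le (hD : D = A₂₂ + A₂₁ * matrixClosure A₁₁ * A₁₂) :
    IsLeast {X | 1 + fromBlocks A₁₁ A₁₂ A₂₁ A₂₂ * X ≤ X}
      (fromBlocks
        (matrixClosure A₁₁ +
          matrixClosure A₁₁ * A₁₂ * matrixClosure D * A₂₁ * matrixClosure A₁₁)
        (matrixClosure A₁₁ * A₁₂ * matrixClosure D)
        (matrixClosure D * A₂₁ * matrixClosure A₁₁)
        (matrixClosure D)) := by
  set a := matrixClosure A₁₁
  set d := matrixClosure D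
  have one_add_mul_le_iff (P : Matrix k k ℝ≥0∞) (Q : Matrix k m ℝ≥0∞) (R : Matrix m k ℝ≥0∞)
      (S : Matrix m m ℝ≥0∞) :
      1 + fromBlocks A₁₁ A₁₂ A₂₁ A₂₂ * fromBlocks P Q R S ≤ fromBlocks P Q R S ↔
        (1 + (A₁₁ * P + A₁₂ * R) ≤ P ∧ 0 + (A₂₁ * P + A₂₂ * R) ≤ R) ∧
          (0 + (A₁₁ * Q + A₁₂ * S) ≤ Q ∧ 1 + (A₂₁ * Q + A₂₂ * S) ≤ S) := by
    rw [fromBlocks_multiply, ← fromBlocks_one, fromBlocks_add, fromBlocks_le_fromBlocks_iff]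
    tauto
  -- the two block columns of `1`, with right-hand sides `(1, 0)` and `(0, 1)`
  have hy₂ : d * A₂₁ * a = d * (0 + A₂₁ * a * (1 : Matrix k k ℝ≥0∞)) := by
    simp [Matrix.mul_assoc]
  have hy₁ : a + a * A₁₂ * d * A₂₁ * a = a * (1 + A₁₂ * (d * A₂₁ * a)) := by
    simp [Matrix.mul_add, Matrix.mul_assoc]
  have hz₂ : d = d * (1 + A₂₁ * a * (0 : Matrix k m ℝ≥0∞)) := by simp
  have hz₁ : a * A₁₂ * d = a * (0 + A₁₂ * d) := by simp [Matrix.mul_assoc]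
  constructor
  · show 1 + fromBlocks A₁₁ A₁₂ A₂₁ A₂₂ * _ ≤ _
    rw [one_add_mul_le_iff]
    have col₁ := block_elimination_eq hD hy₂ hy₁
    have col₂ := block_elimination_eq hD hz₂ hz₁
    exact ⟨⟨col₁.1.le, col₁.2.le⟩, ⟨col₂.1.le, col₂.2.le⟩⟩
  · intro X (hX : 1 + _ * X ≤ X)
    rw [← fromBlocks_toBlocks X, one_add_mul_le_iff] at hX
    rw [← fromBlocks_toBlocks X]
    obtain ⟨⟨hP, hR⟩, ⟨hQ, hS⟩⟩ := hX
    have col₁ := block_elimination_le hD hy₂ hy₁ hP hR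
    have col₂ := block_elimination_le hD hz₂ hz₁ hQ hS
    exact fromBlocks_le_fromBlocks_iff.2 ⟨col₁.1, col₂.1, col₁.2, col₂.2⟩

end BlockElimination

/-- Escalator (block) formula for the closure of a block matrix over `ℝ≥0∞`:
with `D = A22 + A21 * A11* * A12`, the closure of the block matrix
`[[A11, A12], [A21, A22]]` is
`[[A11* + A11* A12 D* A21 A11*, A11* A12 D*], [D* A21 A11*, D*]]`. -/
theorem block_matrix_closure (k m : ℕ)
    (A11 : Matrix (Fin k) (Fin k) ℝ≥0∞) (A12 : Matrix (Fin k) (Fin m) ℝ≥0∞)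
    (A21 : Matrix (Fin m) (Fin k) ℝ≥0∞) (A22 : Matrix (Fin m) (Fin m) ℝ≥0∞)
    (D : Matrix (Fin m) (Fin m) ℝ≥0∞)
    (hD : D = A22 + A21 * matrixClosure A11 * A12) :
    matrixClosure (Matrix.fromBlocks A11 A12 A21 A22) =
      Matrix.fromBlocks
        (matrixClosure A11 +
          matrixClosure A11 * A12 * matrixClosure D * A21 * matrixClosure A11)
        (matrixClosure A11 * A12 * matrixClosure D)
        (matrixClosure D * A21 * matrixClosure A11)
        (matrixClosure D) := by
  simpa only [Matrix.mul_one] using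
    (isLeast_matrixClosure_mul _ 1).unique (isLeast_one_add_fromBlocks_mul_le hD)
end

section
/- Let A be an m×n matrix and B an n×m matrix over ℝ≥0∞, and let the closure of a square matrix M over ℝ≥0∞ be M* := ∑' k, M^k. Then (A·B)*·A = A·(B·A)*, where A·B is m×m and B·A is n×n. -/
open scoped ENNReal

lemma tsum_matrix_apply {p q : Type*} (f : ℕ → Matrix p q ℝ≥0∞) (i : p) (j : q) :
    (∑' k, f k) i j = ∑' k, f k i j := by
  have h1 : (∑' k, f k) i = ∑' k, f k i := by
    refine tsum_apply ?_
    exact Pi.summable.2 fun _ => Pi.summable.2 fun _ => ENNReal.summable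
  rw [h1]
  refine tsum_apply ?_
  exact Pi.summable.2 fun _ => ENNReal.summable

lemma tsum_mul_left_mat {p q r : Type*} [Fintype q] (f : ℕ → Matrix p q ℝ≥0∞)
    (A : Matrix q r ℝ≥0∞) : (∑' k, f k) * A = ∑' k, f k * A := by
  ext i j
  rw [tsum_matrix_apply]
  simp only [Matrix.mul_apply]
  simp only [tsum_matrix_apply, ← ENNReal.tsum_mul_right]
  exact (Summable.tsum_finsetSum fun _ _ => ENNReal.summable).symm

lemma tsum_mul_right_mat {p q r : Type*} [Fintype q] (f : ℕ → Matrix q r ℝ≥0∞)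
    (A : Matrix p q ℝ≥0∞) : A * (∑' k, f k) = ∑' k, A * f k := by
  ext i j
  rw [tsum_matrix_apply]
  simp only [Matrix.mul_apply]
  simp only [tsum_matrix_apply, ← ENNReal.tsum_mul_left]
  exact (Summable.tsum_finsetSum fun _ _ => ENNReal.summable).symm

/-- For an `m × n` matrix `A` and an `n × m` matrix `B` over `ℝ≥0∞`,
`(A B)* A = A (B A)*`. -/
theorem closure_mul_comm (m n : ℕ)
    (A : Matrix (Fin m) (Fin n) ℝ≥0∞) (B : Matrix (Fin n) (Fin m) ℝ≥0∞) :
    matrixClosure (A * B) * A = A * matrixClosure (B * A) := by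
  unfold matrixClosure
  rw [tsum_mul_left_mat, tsum_mul_right_mat]
  congr 1
  funext k
  induction k with
  | zero => simp
  | succ k ih =>
    rw [pow_succ, pow_succ, Matrix.mul_assoc, Matrix.mul_assoc, ← Matrix.mul_assoc,
      ih, Matrix.mul_assoc]
end

section
/- Let S be a semiring and let L₁, …, Lₙ be n×n matrices over S such that Lᵢ·Lⱼ = 0 whenever i ≤ j (in particular Lᵢ² = 0 for every i). Set L := L₁ + ⋯ + Lₙ. Then L^{n+1} = 0 and ∑_{k=0}^{n} L^k = (I + Lₙ)·(I + Lₙ₋₁)·⋯·(I + L₁). In particular the closure of L, given by the finite sum I + L + L² + ⋯ + Lⁿ, factorizes as the product of the elementary factors (I + Lₖ) taken in decreasing order of k. -/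
private theorem pow_add_eq {R : Type*} [Semiring R] (A B : R)
    (hAB : A * B = 0) (hBB : B * B = 0) :
    ∀ k : ℕ, (A + B) ^ (k + 1) = A ^ (k + 1) + B * A ^ k := by
  intro k
  induction k with
  | zero => simp
  | succ k ih =>
    rw [pow_succ' (A + B), ih, mul_add, add_mul, add_mul, ← pow_succ',
      ← mul_assoc A B, hAB, zero_mul, ← mul_assoc B B, hBB, zero_mul,
      add_zero, add_zero]

private theorem aux {R : Type*} [Semiring R] (l : List R)
    (hp : l.Pairwise (fun a b => a * b = 0)) (hsq : ∀ a ∈ l, a * a = 0) :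
    l.sum ^ (l.length + 1) = 0 ∧
      ∑ k ∈ Finset.range (l.length + 1), l.sum ^ k =
        (l.reverse.map (fun a => 1 + a)).prod := by
  induction l using List.reverseRecOn with
  | nil => simp
  | append_singleton l' x ih =>
    rw [List.pairwise_append] at hp
    obtain ⟨hp', -, hcross⟩ := hp
    have hsq' : ∀ a ∈ l', a * a = 0 := fun a ha => hsq a (by simp [ha])
    obtain ⟨ihpow, ihsum⟩ := ih hp' hsq'
    have hAB : l'.sum * x = 0 := by
      have : (l'.map (· * x)).sum = 0 := by
        rw [List.sum_eq_zero]
        intro y hy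
        obtain ⟨a, ha, rfl⟩ := List.mem_map.mp hy
        exact hcross a ha x (by simp)
      calc l'.sum * x = ((l'.map id).sum) * x := by simp
        _ = (l'.map fun b => id b * x).sum := (List.sum_map_mul_right _ _ _).symm
        _ = 0 := by simpa using this
    have hBB : x * x = 0 := hsq x (by simp)
    have key := pow_add_eq l'.sum x hAB hBB
    have hlen : (l' ++ [x]).length = l'.length + 1 := by simp
    have hsum : (l' ++ [x]).sum = l'.sum + x := by simp
    constructor
    · rw [hsum, hlen, key (l'.length + 1), pow_succ', ← pow_succ' l'.sum, ihpow,
        pow_succ, ihpow, zero_mul, zero_add, mul_zero]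
    · rw [hsum, hlen, Finset.sum_range_succ' _ (l'.length + 1)]
      have hterms : ∑ k ∈ Finset.range (l'.length + 1), (l'.sum + x) ^ (k + 1)
          = ∑ k ∈ Finset.range (l'.length + 1), (l'.sum ^ (k + 1) + x * l'.sum ^ k) := by
        exact Finset.sum_congr rfl fun k _ => key k
      rw [hterms, Finset.sum_add_distrib, ← Finset.mul_sum, ihsum]
      have h1 : ∑ k ∈ Finset.range (l'.length + 1), l'.sum ^ (k + 1) + (l'.sum + x) ^ 0
          = ∑ k ∈ Finset.range (l'.length + 2), l'.sum ^ k := by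
        rw [Finset.sum_range_succ' (fun k => l'.sum ^ k) (l'.length + 1)]
        simp
      have h2 : ∑ k ∈ Finset.range (l'.length + 2), l'.sum ^ k
          = ∑ k ∈ Finset.range (l'.length + 1), l'.sum ^ k := by
        rw [Finset.sum_range_succ, ihpow, add_zero]
      rw [add_right_comm, h1, h2, ihsum]
      have hprod : ((l' ++ [x]).reverse.map (fun a => 1 + a)).prod
          = (1 + x) * (l'.reverse.map (fun a => 1 + a)).prod := by
        simp
      rw [hprod, add_mul, one_mul]

/-- If `L₁, …, Lₙ` are `n × n` matrices over a semiring with `Lᵢ Lⱼ = 0`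
whenever `i ≤ j`, then `L = L₁ + ⋯ + Lₙ` satisfies `L^(n+1) = 0` and
`∑_{k=0}^{n} L^k = (I + Lₙ) (I + Lₙ₋₁) ⋯ (I + L₁)`. -/
theorem closure_factorization (S : Type*) [Semiring S] (n : ℕ)
    (L : Fin n → Matrix (Fin n) (Fin n) S)
    (hL : ∀ i j : Fin n, i ≤ j → L i * L j = 0) :
    (∑ i, L i) ^ (n + 1) = 0 ∧
    ∑ k ∈ Finset.range (n + 1), (∑ i, L i) ^ k =
      ((List.finRange n).reverse.map (fun i => 1 + L i)).prod := by
  set l : List (Matrix (Fin n) (Fin n) S) := (List.finRange n).map L with hl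
  have hp : l.Pairwise (fun a b => a * b = 0) := by
    rw [hl, List.pairwise_map]
    exact (List.pairwise_lt_finRange n).imp fun h => hL _ _ h.le
  have hsq : ∀ a ∈ l, a * a = 0 := by
    rintro a ha
    obtain ⟨i, -, rfl⟩ := List.mem_map.mp ha
    exact hL i i le_rfl
  have hlen : l.length = n := by simp [hl]
  have hsum : l.sum = ∑ i, L i := by rw [hl, ← Fin.sum_univ_def]
  have hrev : l.reverse.map (fun a => 1 + a)
      = (List.finRange n).reverse.map (fun i => 1 + L i) := by
    rw [hl, ← List.map_reverse, List.map_map]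
    rfl
  have := aux l hp hsq
  rw [hlen, hsum, hrev] at this
  exact this
end

section
/- Let A be an n×n matrix (n ≥ 1) over the min-plus semiring Tropical(WithTop ℝ), and suppose every cycle of A has nonnegative weight: for every k ≥ 1 and every index i, 0 ≤ untrop((A^k) i i) in WithTop ℝ. Then the power series of A truncates at n−1 terms: for every m ≥ n−1, ∑_{k=0}^{m} A^k = ∑_{k=0}^{n−1} A^k (sums of matrix powers taken in the tropical semiring, i.e. entrywise minimum). -/
/-!
Read `(A ^ k) i j` as the minimum weight of a walk with `k` edges from `i` to `j`. A walk with at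
least `n` edges visits `n + 1` vertices, so it repeats one and contains a closed walk; cutting that
closed walk out does not increase the weight, because closed walks have nonnegative weight. Hence
every walk weighs at least `(∑ k < n, A ^ k) i j`, and powers beyond `n - 1` cannot lower the minimum.
-/

open Tropical Finset

namespace List

theorem exists_eq_append_cons_append_cons_of_not_nodup {α : Type*} :
    ∀ {l : List α}, ¬l.Nodup → ∃ (v : α) (P M S : List α), l = P ++ v :: (M ++ v :: S)
  | [], h => absurd nodup_nil h
  | a :: l, h => by
    rw [nodup_cons, not_and_or, not_not] at h
    rcases h with ha | hl
    · obtain ⟨M, S, rfl⟩ := append_of_mem ha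
      exact ⟨a, [], M, S, rfl⟩
    · obtain ⟨v, P, M, S, rfl⟩ := exists_eq_append_cons_append_cons_of_not_nodup hl
      exact ⟨v, a :: P, M, S, rfl⟩

end List

namespace Matrix

variable {ι R : Type*}

section Semiring

variable [Semiring R] (A : Matrix ι ι R)

/-- The weight of the walk visiting the vertices of the list in order (`1` for `[]`, which is not
a walk). -/
def walkWeight : List ι → R
  | [] => 1
  | [_] => 1
  | a :: b :: l => A a b * walkWeight (b :: l)

theorem walkWeight_append_cons (P : List ι) (v : ι) (S : List ι) :
    walkWeight A (P ++ v :: S) = walkWeight A (P ++ [v]) * walkWeight A (v :: S) := by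
  induction P with
  | nil => simp [walkWeight]
  | cons a P ih =>
    cases P with
    | nil => simp [walkWeight]
    | cons b P => simp only [List.cons_append, walkWeight] at ih ⊢; rw [ih, mul_assoc]

theorem pow_succ_apply_eq_sum_walkWeight [Fintype ι] [DecidableEq ι] (k : ℕ) (i j : ι) :
    (A ^ (k + 1)) i j = ∑ f : Fin k → ι, walkWeight A (i :: List.ofFn f ++ [j]) := by
  induction k generalizing i with
  | zero => simp [walkWeight]
  | succ k ih =>
    rw [pow_succ', mul_apply, ← (Fin.consEquiv fun _ ↦ ι).sum_comp, Fintype.sum_prod_type]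
    refine sum_congr rfl fun x _ ↦ ?_
    simp [ih, mul_sum, walkWeight, List.ofFn_succ]

end Semiring

section Tropical

variable [LinearOrderedAddCommMonoidWithTop R]

theorem untrop_sum_apply {κ : Type*} (s : Finset κ) (M : κ → Matrix ι ι (Tropical R)) (i j : ι) :
    untrop ((∑ k ∈ s, M k) i j) = s.inf fun k ↦ untrop (M k i j) := by
  rw [sum_apply, Finset.untrop_sum']
  rfl

variable [Fintype ι] [DecidableEq ι]

def NoNegativeCycles (A : Matrix ι ι (Tropical R)) : Prop :=
  ∀ k, 1 ≤ k → ∀ i, (0 : R) ≤ untrop ((A ^ k) i i)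

theorem untrop_pow_apply_le_walkWeight (A : Matrix ι ι (Tropical R)) :
    ∀ {V : List ι} {i j : ι}, V.head? = some i → V.getLast? = some j →
      untrop ((A ^ (V.length - 1)) i j) ≤ untrop (walkWeight A V)
  | [a], i, j, hi, hj => by
    obtain rfl : a = i := by simpa using hi
    obtain rfl : a = j := by simpa using hj
    simp [walkWeight]
  | a :: b :: l, i, j, hi, hj => by
    obtain rfl : a = i := by simpa using hi
    rw [List.getLast?_cons_cons] at hj
    have ih := untrop_pow_apply_le_walkWeight A (V := b :: l) rfl hj
    simp only [List.length_cons, add_tsub_cancel_right, pow_succ', mul_apply, walkWeight] at ih ⊢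
    rw [Finset.untrop_sum', untrop_mul]
    exact (inf_le (mem_univ b)).trans (add_le_add le_rfl ih)

variable {A : Matrix ι ι (Tropical R)}

theorem NoNegativeCycles.untrop_walkWeight_le (hA : NoNegativeCycles A) (P M S : List ι) (v : ι) :
    untrop (walkWeight A (P ++ v :: S)) ≤ untrop (walkWeight A (P ++ v :: (M ++ v :: S))) := by
  have hcycle : (0 : R) ≤ untrop (walkWeight A (v :: M ++ [v])) :=
    (hA _ (by simp) v).trans (untrop_pow_apply_le_walkWeight A rfl (by simp [List.getLast?_cons]))
  rw [walkWeight_append_cons A P v S, walkWeight_append_cons A P v (M ++ v :: S),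
    ← List.cons_append, walkWeight_append_cons A (v :: M), untrop_mul, untrop_mul, untrop_mul]
  exact add_le_add le_rfl (le_add_of_nonneg_left hcycle)

theorem NoNegativeCycles.untrop_sum_range_pow_apply_le_walkWeight (hA : NoNegativeCycles A)
    {V : List ι} {i j : ι} (hi : V.head? = some i) (hj : V.getLast? = some j) :
    untrop ((∑ k ∈ range (Fintype.card ι), A ^ k) i j) ≤ untrop (walkWeight A V) := by
  by_cases hshort : V.length ≤ Fintype.card ι
  · have hV₀ : 0 < V.length := List.length_pos_iff.2 (by rintro rfl; simp at hi)
    rw [untrop_sum_apply]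
    exact (inf_le (mem_range.2 (by omega))).trans (untrop_pow_apply_le_walkWeight A hi hj)
  · obtain ⟨v, P, M, S, rfl⟩ :=
      List.exists_eq_append_cons_append_cons_of_not_nodup fun hnd ↦ hshort hnd.length_le_card
    have hi' : (P ++ v :: S).head? = some i := by simpa [List.head?_append] using hi
    have hj' : (P ++ v :: S).getLast? = some j := by
      rwa [List.getLast?_append_cons, ← List.cons_append, List.getLast?_append_cons,
        ← List.getLast?_append_cons P] at hj
    exact (hA.untrop_sum_range_pow_apply_le_walkWeight hi' hj').trans
      (hA.untrop_walkWeight_le P M S v)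
termination_by V.length
decreasing_by simp_all

theorem NoNegativeCycles.untrop_sum_range_card_pow_apply_le (hA : NoNegativeCycles A)
    (k : ℕ) (i j : ι) :
    untrop ((∑ l ∈ range (Fintype.card ι), A ^ l) i j) ≤ untrop ((A ^ k) i j) := by
  cases k with
  | zero =>
    rw [untrop_sum_apply]
    exact inf_le (mem_range.2 (Fintype.card_pos_iff.2 ⟨i⟩))
  | succ k =>
    rw [pow_succ_apply_eq_sum_walkWeight, Finset.untrop_sum']
    exact Finset.le_inf fun f _ ↦ hA.untrop_sum_range_pow_apply_le_walkWeight (by simp)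
      (by rw [List.getLast?_append_cons, List.getLast?_singleton])

theorem NoNegativeCycles.sum_range_pow_eq_sum_range_card_pow (hA : NoNegativeCycles A) {m : ℕ}
    (hm : Fintype.card ι ≤ m) :
    ∑ k ∈ range m, A ^ k = ∑ k ∈ range (Fintype.card ι), A ^ k := by
  ext i j
  apply untrop_injective
  rw [untrop_sum_apply, untrop_sum_apply]
  exact le_antisymm (inf_mono (range_subset_range.2 hm))
    (Finset.le_inf fun k _ ↦ by simpa only [untrop_sum_apply] using
      hA.untrop_sum_range_card_pow_apply_le k i j)

end Tropical

end Matrix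

theorem tropical_power_series_truncates_general (n : ℕ)
    (A : Matrix (Fin n) (Fin n) (Tropical (WithTop ℝ)))
    (hcyc : ∀ k : ℕ, 1 ≤ k → ∀ i : Fin n,
      (0 : WithTop ℝ) ≤ Tropical.untrop ((A ^ k) i i)) :
    ∀ m : ℕ, n - 1 ≤ m →
      ∑ k ∈ Finset.range (m + 1), A ^ k = ∑ k ∈ Finset.range n, A ^ k := by
  intro m hm
  simpa using Matrix.NoNegativeCycles.sum_range_pow_eq_sum_range_card_pow hcyc
    (m := m + 1) (by rw [Fintype.card_fin]; omega)

/-- Over the min-plus semiring `Tropical (WithTop ℝ)`, if every cycle of an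
`n × n` matrix `A` (with `n ≥ 1`) has nonnegative weight, then the power
series of `A` truncates: `∑_{k=0}^{m} A^k = ∑_{k=0}^{n-1} A^k` for every
`m ≥ n - 1`. -/
theorem tropical_power_series_truncates (n : ℕ) (hn : 1 ≤ n)
    (A : Matrix (Fin n) (Fin n) (Tropical (WithTop ℝ)))
    (hcyc : ∀ k : ℕ, 1 ≤ k → ∀ i : Fin n,
      (0 : WithTop ℝ) ≤ Tropical.untrop ((A ^ k) i i)) :
    ∀ m : ℕ, n - 1 ≤ m →
      ∑ k ∈ Finset.range (m + 1), A ^ k = ∑ k ∈ Finset.range n, A ^ k :=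
  tropical_power_series_truncates_general n A hcyc
end
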